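/- Let E = {0,...,K}^S for a countable set S with the product partial order. If μ₁ ≤ μ₂ in stochastic order (i.e. ∫ f dμ₁ ≤ ∫ f dμ₂ for every bounded nondecreasing f), and μ₂ ≤ μ₁, then μ₁ = μ₂. -/
import Mathlib


open MeasureTheory Set

private lemma fin_top_eq_generateFrom_Ici (K : ℕ) :
    (⊤ : MeasurableSpace (Fin (K + 1))) =
      MeasurableSpace.generateFrom {s | ∃ c, s = Ici c} := by
  refine le_antisymm ?_ le_top
  intro s _
  have hsing : ∀ c : Fin (K + 1),
      MeasurableSet[MeasurableSpace.generateFrom {s | ∃ c, s = Ici c}] {c} := by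
    intro c
    have h1 : ({c} : Set (Fin (K + 1))) = Ici c \ ⋃ (d : Fin (K + 1)) (_ : c < d), Ici d := by
      ext x
      simp only [mem_singleton_iff, mem_diff, mem_Ici, mem_iUnion, not_exists]
      constructor
      · rintro rfl
        exact ⟨le_refl x, fun d hd hdx => absurd hdx (not_le.2 hd)⟩
      · rintro ⟨hcx, h⟩
        rcases eq_or_lt_of_le hcx with h' | h'
        · exact h'.symm
        · exact absurd (le_refl x) (h x h')
    rw [h1]
    refine MeasurableSet.diff (MeasurableSpace.measurableSet_generateFrom ⟨c, rfl⟩) ?_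
    exact MeasurableSet.iUnion fun d => MeasurableSet.iUnion
      fun _ => MeasurableSpace.measurableSet_generateFrom ⟨d, rfl⟩
  have : s = ⋃ c ∈ s, {c} := by simp
  rw [this]
  exact MeasurableSet.biUnion (Set.to_countable _) (fun c _ => hsing c)

/-- Antisymmetry of the stochastic order on `{0,...,K}^S` for countable `S`:
if `μ₁ ≤ μ₂` and `μ₂ ≤ μ₁` in stochastic order (tested on bounded nondecreasing
functions), then `μ₁ = μ₂`. -/
theorem stochastic_order_antisymm (S : Type*) [Countable S] (K : ℕ)
    (μ₁ μ₂ : Measure (S → Fin (K + 1)))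
    [IsProbabilityMeasure μ₁] [IsProbabilityMeasure μ₂]
    (h12 : ∀ f : (S → Fin (K + 1)) → ℝ, Monotone f → (∃ C, ∀ η, |f η| ≤ C) →
      ∫ η, f η ∂μ₁ ≤ ∫ η, f η ∂μ₂)
    (h21 : ∀ f : (S → Fin (K + 1)) → ℝ, Monotone f → (∃ C, ∀ η, |f η| ≤ C) →
      ∫ η, f η ∂μ₂ ≤ ∫ η, f η ∂μ₁) :
    μ₁ = μ₂ := by
  classical
  set P : Set (Set (S → Fin (K + 1))) := {A | ∃ a, A = Ici a} with hP
  -- each element of P is measurable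
  have hmeas : ∀ a : S → Fin (K + 1), MeasurableSet (Ici a) := by
    intro a
    have : Ici a = ⋂ i, (fun η : S → Fin (K + 1) => η i) ⁻¹' Ici (a i) := by
      ext η; simp [Pi.le_def, Set.mem_Ici]
    rw [this]
    exact MeasurableSet.iInter fun i => (measurable_pi_apply i) measurableSet_Ici
  -- the product σ-algebra is generated by P
  have hgen : (MeasurableSpace.pi : MeasurableSpace (S → Fin (K + 1))) =
      MeasurableSpace.generateFrom P := by
    refine le_antisymm ?_ ?_
    · refine iSup_le fun i => ?_
      rw [show ((fun _ : S => Fin.instMeasurableSpace (K + 1)) i : MeasurableSpace (Fin (K + 1))) =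
          (⊤ : MeasurableSpace (Fin (K + 1))) from rfl, fin_top_eq_generateFrom_Ici K,
        MeasurableSpace.comap_generateFrom]
      refine MeasurableSpace.generateFrom_le ?_
      rintro _ ⟨s, ⟨c, rfl⟩, rfl⟩
      -- the preimage is Ici of the function supported at i
      have : (fun η : S → Fin (K + 1) => η i) ⁻¹' Ici c =
          Ici (fun j => if j = i then c else 0) := by
        ext η
        simp only [mem_preimage, mem_Ici, Pi.le_def]
        constructor
        · intro h j
          by_cases hj : j = i
          · subst hj; simpa using h
          · simp [hj, Fin.zero_le]
        · intro h
          have := h i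
          simpa using this
      rw [this]
      exact MeasurableSpace.measurableSet_generateFrom ⟨_, rfl⟩
    · refine MeasurableSpace.generateFrom_le ?_
      rintro _ ⟨a, rfl⟩
      exact hmeas a
  -- P is a π-system
  have hpi : IsPiSystem P := by
    rintro _ ⟨a, rfl⟩ _ ⟨b, rfl⟩ -
    exact ⟨a ⊔ b, by ext η; simp [Pi.le_def, forall_and]⟩
  -- the measures agree on P
  have hagree : ∀ A ∈ P, μ₁ A = μ₂ A := by
    rintro _ ⟨a, rfl⟩
    set f : (S → Fin (K + 1)) → ℝ := (Ici a).indicator 1 with hf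
    have hmono : Monotone f := by
      intro η η' hη
      by_cases h : η ∈ Ici a
      · have h' : η' ∈ Ici a := le_trans h hη
        simp [hf, h, h']
      · have : f η = 0 := by simp [hf, h]
        rw [this]
        by_cases h' : η' ∈ Ici a <;> simp [hf, h']
    have hbdd : ∃ C, ∀ η, |f η| ≤ C := by
      refine ⟨1, fun η => ?_⟩
      by_cases h : η ∈ Ici a <;> simp [hf, h]
    have hi1 : ∫ η, f η ∂μ₁ = (μ₁ (Ici a)).toReal := integral_indicator_one (hmeas a)
    have hi2 : ∫ η, f η ∂μ₂ = (μ₂ (Ici a)).toReal := integral_indicator_one (hmeas a)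
    have heq : (μ₁ (Ici a)).toReal = (μ₂ (Ici a)).toReal := by
      have := h12 f hmono hbdd
      have := h21 f hmono hbdd
      rw [hi1, hi2] at *
      linarith
    exact (ENNReal.toReal_eq_toReal_iff' (measure_ne_top μ₁ _) (measure_ne_top μ₂ _)).mp heq
  exact ext_of_generate_finite P hgen hpi hagree (by simp)
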